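/- Let K ⊆ ℂ be compact with nowhere dense boundary, and let P be a polynomial with no zeros in the interior K⁰ of K. Then for every ε > 0 there exists a polynomial P' with no zeros on K such that sup_{z∈K} |P(z) − P'(z)| < ε. -/

import Mathlib

/-!
Over an algebraically closed field, `P = c ∏ (X - r)`. Uniform limits on a compact set `K` of
polynomials without zeros on `K` form a multiplicative monoid. It contains every constant (`0` is a
limit of nonzero constants), and every `X - r` with `r` in the closure of `Kᶜ`, as the limit of
`X - r'` with `r' ∉ K`. A zero of `P` off the interior of `K` is such an `r`.
-/

open Polynomial

namespace Polynomial

variable {𝕜 : Type*} [NontriviallyNormedField 𝕜]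

noncomputable section

def zeroFreeOn (K : Set 𝕜) : Submonoid 𝕜[X] where
  carrier := {p | ∀ z ∈ K, p.eval z ≠ 0}
  mul_mem' hp hq z hz := by simpa only [eval_mul] using mul_ne_zero (hp z hz) (hq z hz)
  one_mem' _ _ := by simp

variable (K : Set 𝕜)

lemma continuous_toContinuousMapOnAlgHom_C :
    Continuous fun a : 𝕜 ↦ toContinuousMapOnAlgHom K (C a) := by
  simpa only [← algebraMap_eq, AlgHom.commutes] using continuous_algebraMap 𝕜 C(K, 𝕜)

lemma continuous_toContinuousMapOnAlgHom_X_sub_C :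
    Continuous fun a : 𝕜 ↦ toContinuousMapOnAlgHom K (X - C a) := by
  simp only [map_sub]
  exact continuous_const.sub (continuous_toContinuousMapOnAlgHom_C K)

variable [CompactSpace K]

def zeroFreeOnClosure : Submonoid C(K, 𝕜) :=
  ((zeroFreeOn K).map (toContinuousMapOnAlgHom K)).topologicalClosure

lemma toContinuousMapOnAlgHom_C_mem_zeroFreeOnClosure (a : 𝕜) :
    toContinuousMapOnAlgHom K (C a) ∈ zeroFreeOnClosure K :=
  map_mem_closure (f := fun a ↦ toContinuousMapOnAlgHom K (C a))
    (continuous_toContinuousMapOnAlgHom_C K) (dense_compl_singleton 0 a)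
    fun _ hb ↦ Submonoid.mem_map_of_mem _ fun _ _ ↦ by simpa using hb

lemma toContinuousMapOnAlgHom_X_sub_C_mem_zeroFreeOnClosure {r : 𝕜} (hr : r ∈ closure Kᶜ) :
    toContinuousMapOnAlgHom K (X - C r) ∈ zeroFreeOnClosure K :=
  map_mem_closure (f := fun a ↦ toContinuousMapOnAlgHom K (X - C a))
    (continuous_toContinuousMapOnAlgHom_X_sub_C K) hr
    fun _ hw ↦ Submonoid.mem_map_of_mem _ fun z hz ↦ by
      simpa [sub_eq_zero] using ne_of_mem_of_not_mem hz hw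

theorem toContinuousMapOnAlgHom_mem_zeroFreeOnClosure [IsAlgClosed 𝕜] {P : 𝕜[X]}
    (hP : ∀ z ∈ interior K, P.eval z ≠ 0) :
    toContinuousMapOnAlgHom K P ∈ zeroFreeOnClosure K := by
  rw [← C_leadingCoeff_mul_prod_multiset_X_sub_C (IsAlgClosed.card_roots_eq_natDegree (p := P)),
    map_mul, map_multiset_prod, Multiset.map_map]
  refine mul_mem (toContinuousMapOnAlgHom_C_mem_zeroFreeOnClosure K _)
    (multiset_prod_mem _ fun _ hf ↦ ?_)
  obtain ⟨r, hr, rfl⟩ := Multiset.mem_map.1 hf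
  refine toContinuousMapOnAlgHom_X_sub_C_mem_zeroFreeOnClosure K ?_
  rw [closure_compl]
  exact fun hrK ↦ hP r hrK (mem_roots'.1 hr).2

end

theorem exists_mem_zeroFreeOn_forall_norm_sub_lt [IsAlgClosed 𝕜] {K : Set 𝕜}
    (hK : IsCompact K) {P : 𝕜[X]} (hP : ∀ z ∈ interior K, P.eval z ≠ 0) {ε : ℝ}
    (hε : 0 < ε) :
    ∃ Q ∈ zeroFreeOn K, ∀ z ∈ K, ‖P.eval z - Q.eval z‖ < ε := by
  have := isCompact_iff_compactSpace.1 hK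
  obtain ⟨_, ⟨Q, hQ, rfl⟩, hPQ⟩ :=
    Metric.mem_closure_iff.1 (toContinuousMapOnAlgHom_mem_zeroFreeOnClosure K hP) ε hε
  refine ⟨Q, hQ, fun z hz ↦ ?_⟩
  simpa [dist_eq_norm] using (ContinuousMap.dist_apply_le_dist ⟨z, hz⟩).trans_lt hPQ

end Polynomial

theorem stmt5_general (K : Set ℂ) (hK : IsCompact K)
    (P : Polynomial ℂ) (hP : ∀ z ∈ interior K, P.eval z ≠ 0) :
    ∀ ε > (0 : ℝ), ∃ P' : Polynomial ℂ,
      (∀ z ∈ K, P'.eval z ≠ 0) ∧ ∀ z ∈ K, ‖P.eval z - P'.eval z‖ < ε :=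
  fun _ hε ↦ exists_mem_zeroFreeOn_forall_norm_sub_lt hK hP hε

theorem stmt5 (K : Set ℂ) (hK : IsCompact K) (hnd : IsNowhereDense (frontier K))
    (P : Polynomial ℂ) (hP : ∀ z ∈ interior K, P.eval z ≠ 0) :
    ∀ ε > (0 : ℝ), ∃ P' : Polynomial ℂ,
      (∀ z ∈ K, P'.eval z ≠ 0) ∧ ∀ z ∈ K, ‖P.eval z - P'.eval z‖ < ε :=
  stmt5_general K hK P hP
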